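/- arXiv:1312.1406 — 5 statements merged into one kernel-verified Lean document; each statement's English description precedes it below -/
import Mathlib

section
/- For real numbers $t \geq 1$, $B \geq 0$, and $0 \leq A \leq C$, the inequality $(A + BC)^t \leq A^t + ((1+B)^t - 1)C^t$ holds. -/
/-!
The function `x ↦ x ^ t` is convex on `[0, ∞)` for `t ≥ 1`, so its increments over intervals of
fixed length `B * C` grow with the left endpoint. Comparing the increments starting at `A` and at
`C ≥ A` gives `(A + B C) ^ t - A ^ t ≤ ((1 + B) C) ^ t - C ^ t = ((1 + B) ^ t - 1) C ^ t`.
-/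

open Set

theorem ConvexOn.map_add_sub_map_le_map_add_sub_map {𝕜 : Type*} [Field 𝕜] [LinearOrder 𝕜]
    [IsStrictOrderedRing 𝕜] {s : Set 𝕜} {f : 𝕜 → 𝕜} (hf : ConvexOn 𝕜 s f) {x y d : 𝕜}
    (hx : x ∈ s) (hyd : y + d ∈ s) (hxy : x ≤ y) (hd : 0 ≤ d) :
    f (x + d) - f x ≤ f (y + d) - f y := by
  rcases hd.eq_or_lt with rfl | hd
  · simp
  have hL : 0 < y + d - x := by linarith
  -- `x + d` and `y` are the convex combinations of `x` and `y + d` with swapped weights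
  set μ := d / (y + d - x)
  have hμ : 0 ≤ μ := by positivity
  have hμ' : 0 ≤ 1 - μ := by
    rw [sub_nonneg, div_le_one hL]
    linarith
  have hxd : (1 - μ) • x + μ • (y + d) = x + d := by
    simp only [smul_eq_mul, μ]
    field_simp
    ring
  have hy : μ • x + (1 - μ) • (y + d) = y := by
    simp only [smul_eq_mul, μ]
    field_simp
    ring
  have h₁ := hf.2 hx hyd hμ' hμ (by ring)
  have h₂ := hf.2 hx hyd hμ hμ' (by ring)
  rw [hxd] at h₁
  rw [hy] at h₂
  simp only [smul_eq_mul] at h₁ h₂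
  linarith

/-- Lemma 5.2 (Magic Inequality): for real `t ≥ 1`, `B ≥ 0`, `0 ≤ A ≤ C`,
`(A + B*C)^t ≤ A^t + ((1+B)^t - 1) * C^t`. -/
theorem magic_inequality (t A B C : ℝ) (ht : 1 ≤ t) (hB : 0 ≤ B)
    (hA : 0 ≤ A) (hAC : A ≤ C) :
    (A + B * C) ^ t ≤ A ^ t + ((1 + B) ^ t - 1) * C ^ t := by
  have hC : 0 ≤ C := hA.trans hAC
  have hBC : 0 ≤ B * C := mul_nonneg hB hC
  have hincr := (convexOn_rpow ht).map_add_sub_map_le_map_add_sub_map (mem_Ici.2 hA)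
    (mem_Ici.2 (add_nonneg hC hBC)) hAC hBC
  have hscale : (C + B * C) ^ t = (1 + B) ^ t * C ^ t := by
    rw [← Real.mul_rpow (by linarith) hC]
    ring_nf
  linarith
end

section
/- Let $(\beta_j)$ be a sequence with $0 < \beta \leq \beta_j < 1/2$ for all $j$, $m_j \geq 2$ integers, and $s > 0$ with $m_j\beta_j^s \leq 1$ for all $j$, where $s = \lim_{k\to\infty} \frac{\log(m_1\cdots m_k)}{-\log(\beta_1\cdots\beta_k)}$. Then for every $0 < \xi < 1$, the set $A_\xi := \{k : m_k\beta_k^s \leq \xi\}$ has natural density zero, i.e., $\#(A_\xi \cap [1,k])/k \to 0$ as $k \to \infty$. -/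
/-!
Put `a j = log (m j * β j ^ s) ≤ 0` and `b j = -log (β j) ∈ (0, -log β₀]`. The definition of `s`
says that `(∑_{j ≤ k} a j) / (∑_{j ≤ k} b j) → 0`, and since `∑_{j ≤ k} b j = O(k)` the Cesàro
means of `a` tend to `0`. Every `j ∈ A_ξ` contributes `a j ≤ log ξ < 0`, so
`#(A_ξ ∩ [0, k)) * log ξ ≥ ∑_{j < k} a j`, and the density of `A_ξ` is at most the Cesàro mean of
`a` divided by `log ξ`.
-/

open Filter Finset Topology

theorem sum_le_card_filter_mul {a : ℕ → ℝ} (ha : ∀ j, a j ≤ 0) (p : ℕ → Prop) [DecidablePred p]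
    {δ : ℝ} (hp : ∀ j, p j → a j ≤ δ) (t : Finset ℕ) :
    ∑ j ∈ t, a j ≤ #(t.filter p) * δ :=
  calc ∑ j ∈ t, a j ≤ ∑ j ∈ t, if p j then δ else 0 :=
        sum_le_sum fun j _ => by split_ifs with hj <;> simp [hj, hp, ha]
    _ = #(t.filter p) * δ := by rw [← sum_filter, sum_const, nsmul_eq_mul]

theorem tendsto_card_filter_div_of_tendsto_sum_div {a : ℕ → ℝ} (ha : ∀ j, a j ≤ 0)
    (p : ℕ → Prop) [DecidablePred p] {δ : ℝ} (hδ : δ < 0) (hp : ∀ j, p j → a j ≤ δ)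
    (h : Tendsto (fun k : ℕ => (∑ j ∈ range k, a j) / k) atTop (𝓝 0)) :
    Tendsto (fun k : ℕ => (#((range k).filter p) : ℝ) / k) atTop (𝓝 0) := by
  refine squeeze_zero (fun k => by positivity) (fun k => ?_) (by simpa using h.div_const δ)
  rw [le_div_iff_of_neg hδ, div_mul_eq_mul_div]
  exact div_le_div_of_nonneg_right (sum_le_card_filter_mul ha p hp _) k.cast_nonneg

theorem tendsto_sum_div_of_tendsto_sum_div_sum {a b : ℕ → ℝ} {C : ℝ} (hb : ∀ j, 0 < b j)
    (hbC : ∀ j, b j ≤ C)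
    (h : Tendsto (fun k => (∑ j ∈ range (k + 1), a j) / ∑ j ∈ range (k + 1), b j) atTop (𝓝 0)) :
    Tendsto (fun k : ℕ => (∑ j ∈ range k, a j) / k) atTop (𝓝 0) := by
  rw [← tendsto_add_atTop_iff_nat 1]
  have hsum (k : ℕ) : 0 < ∑ j ∈ range (k + 1), b j :=
    sum_pos (fun j _ => hb j) nonempty_range_add_one
  have hbounded : IsBoundedUnder (· ≤ ·) atTop
      ((‖·‖) ∘ fun k : ℕ => (∑ j ∈ range (k + 1), b j) / (k + 1 : ℕ)) := by
    refine isBoundedUnder_of ⟨C, fun k => ?_⟩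
    rw [Function.comp_apply, Real.norm_of_nonneg (div_nonneg (hsum k).le k.succ.cast_nonneg),
      div_le_iff₀ (by positivity)]
    simpa [mul_comm] using sum_le_card_nsmul (range (k + 1)) _ _ fun j _ => hbC j
  refine (h.zero_mul_isBoundedUnder_le hbounded).congr fun k => ?_
  field_simp [(hsum k).ne']

theorem log_prod_div_neg_log_prod_sub {ι : Type*} {t : Finset ι} {m β : ι → ℝ}
    (hm : ∀ j, 0 < m j) (hβ : ∀ j, 0 < β j) (hB : ∑ j ∈ t, Real.log (β j) ≠ 0) (s : ℝ) :
    Real.log (∏ j ∈ t, m j) / -Real.log (∏ j ∈ t, β j) - s =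
      (∑ j ∈ t, Real.log (m j * β j ^ s)) / ∑ j ∈ t, -Real.log (β j) := by
  simp only [Real.log_prod (fun j _ => (hm j).ne'), Real.log_prod (fun j _ => (hβ j).ne'),
    Real.log_mul (hm _).ne' (Real.rpow_pos_of_pos (hβ _) s).ne', Real.log_rpow (hβ _),
    sum_add_distrib, ← mul_sum, sum_neg_distrib]
  field_simp
  ring

theorem density_zero_of_small_factor_general (β : ℕ → ℝ) (β₀ : ℝ) (m : ℕ → ℕ) (s : ℝ)
    (hβ₀ : 0 < β₀) (hβ : ∀ j, β₀ ≤ β j ∧ β j < 1 / 2) (hm : ∀ j, 2 ≤ m j)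
    (h1 : ∀ j, (m j : ℝ) * (β j) ^ s ≤ 1)
    (hlim : Tendsto (fun k : ℕ => Real.log (∏ j ∈ Finset.range (k + 1), (m j : ℝ)) /
        (-Real.log (∏ j ∈ Finset.range (k + 1), β j))) atTop (nhds s)) :
    ∀ ξ : ℝ, 0 < ξ → ξ < 1 →
      Tendsto (fun k : ℕ =>
          ((Finset.range k).filter (fun j => (m j : ℝ) * (β j) ^ s ≤ ξ)).card / (k : ℝ))
        atTop (nhds 0) := by
  intro ξ hξ0 hξ1
  have hβpos (j : ℕ) : 0 < β j := hβ₀.trans_le (hβ j).1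
  have hmpos (j : ℕ) : (0 : ℝ) < m j := by exact_mod_cast (hm j).trans_lt' two_pos
  have hpos (j : ℕ) : 0 < (m j : ℝ) * β j ^ s :=
    mul_pos (hmpos j) (Real.rpow_pos_of_pos (hβpos j) s)
  have hb (j : ℕ) : 0 < -Real.log (β j) :=
    neg_pos.2 (Real.log_neg (hβpos j) ((hβ j).2.trans (by norm_num)))
  have hbC (j : ℕ) : -Real.log (β j) ≤ -Real.log β₀ := neg_le_neg (Real.log_le_log hβ₀ (hβ j).1)
  have hB (k : ℕ) : ∑ j ∈ range (k + 1), Real.log (β j) ≠ 0 := by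
    simpa using (sum_pos (fun j _ => hb j) (nonempty_range_add_one (n := k))).ne'
  refine tendsto_card_filter_div_of_tendsto_sum_div (fun j => Real.log_nonpos (hpos j).le (h1 j))
    _ (Real.log_neg hξ0 hξ1) (fun j hj => Real.log_le_log (hpos j) hj)
    (tendsto_sum_div_of_tendsto_sum_div_sum hb hbC ?_)
  simpa [log_prod_div_neg_log_prod_sub hmpos hβpos (hB _)] using hlim.sub_const s

/-- Lemma 6.3 / Corollary 6.5: if `β ≤ β_j < 1/2`, `m_j β_j^s ≤ 1` and `s` is the
limit of `log(m_1⋯m_k)/(-log(β_1⋯β_k))`, then for every `0 < ξ < 1` the set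
`A_ξ = {k : m_k β_k^s ≤ ξ}` has natural density zero. -/
theorem density_zero_of_small_factor (β : ℕ → ℝ) (β₀ : ℝ) (m : ℕ → ℕ) (s : ℝ)
    (hβ₀ : 0 < β₀) (hβ : ∀ j, β₀ ≤ β j ∧ β j < 1 / 2) (hm : ∀ j, 2 ≤ m j)
    (hs : 0 < s) (h1 : ∀ j, (m j : ℝ) * (β j) ^ s ≤ 1)
    (hlim : Tendsto (fun k : ℕ => Real.log (∏ j ∈ Finset.range (k + 1), (m j : ℝ)) /
        (-Real.log (∏ j ∈ Finset.range (k + 1), β j))) atTop (nhds s)) :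
    ∀ ξ : ℝ, 0 < ξ → ξ < 1 →
      Tendsto (fun k : ℕ =>
          ((Finset.range k).filter (fun j => (m j : ℝ) * (β j) ^ s ≤ ξ)).card / (k : ℝ))
        atTop (nhds 0) :=
  density_zero_of_small_factor_general β β₀ m s hβ₀ hβ hm h1 hlim
end

section
/- Let $0 < \beta_j < 1/2$, let $D_j \subset [0,(1-\beta_j)/\beta_j]$ be finite sets with $|d - d'| > 1$ for distinct $d, d' \in D_j$, and let $b(k) = \beta_1\cdots\beta_k$. Suppose $x' = \sum_{j=1}^k d_j' b(j)$ and $x = \sum_{j=1}^k d_j b(j)$ with $d_j, d_j' \in D_j$, where there exists $1 \leq \ell \leq k$ such that $d_j = d_j'$ for $j < \ell$, $d_\ell > d_\ell' + 1$, and $d_j$ is minimal in $D_j$, $d_j'$ is maximal in $D_j$ for $\ell < j \leq k$. Then $x - x' - b(k) \geq (d_\ell - d_\ell' - 1)b(\ell) > 0$; in particular the basic intervals $[x', x' + b(k)]$ and $[x, x + b(k)]$ are disjoint with a positive gap. -/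
/-!
With `b(j) = β₁⋯βⱼ`, the digit sequences cancel below level `ℓ`, contribute
`(d_ℓ - d'_ℓ) b(ℓ)` at level `ℓ`, and above it each term `(d_j - d'_j) b(j)` is at least
`-(1 - β_j)/β_j · b(j) = b(j) - b(j-1)`, because digits lie in `[0, (1 - β_j)/β_j]`.
These lower bounds telescope to `b(k) - b(ℓ)`, so `x - x' ≥ (d_ℓ - d'_ℓ - 1) b(ℓ) + b(k)`.
-/

open Finset

theorem sum_Icc_eq_add_sum_Ioc_of_eq_zero {M : Type*} [AddCommMonoid M] (f : ℕ → M) {ℓ k : ℕ}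
    (hℓ : 1 ≤ ℓ) (hℓk : ℓ ≤ k) (hf : ∀ j, j < ℓ → f j = 0) :
    ∑ j ∈ Icc 1 k, f j = f ℓ + ∑ j ∈ Ioc ℓ k, f j := by
  obtain ⟨m, rfl⟩ : ∃ m, ℓ = m + 1 := ⟨ℓ - 1, by omega⟩
  have hlow : ∑ j ∈ Icc 1 m, f j = 0 :=
    sum_eq_zero fun j hj => hf j (by rw [mem_Icc] at hj; omega)
  have hIcc (n : ℕ) : Icc 1 n = Ioc 0 n := Icc_add_one_left_eq_Ioc 0 n
  rw [hIcc, ← sum_Ioc_consecutive f (Nat.zero_le (m + 1)) hℓk, sum_Ioc_succ_top (Nat.zero_le m),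
    ← hIcc, hlow, zero_add]

section Telescope

variable (β : ℕ → ℝ)

theorem sum_Ioc_one_sub_div_mul_prod_Icc (hβ : ∀ j, β j ≠ 0) {ℓ m : ℕ} (hℓm : ℓ ≤ m) :
    ∑ j ∈ Ioc ℓ m, (1 - β j) / β j * ∏ i ∈ Icc 1 j, β i
      = ∏ i ∈ Icc 1 ℓ, β i - ∏ i ∈ Icc 1 m, β i := by
  induction m, hℓm using Nat.le_induction with
  | base => simp
  | succ n hn ih =>
    rw [sum_Ioc_succ_top hn, ih, prod_Icc_succ_top (by omega)]
    field_simp [hβ (n + 1)]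
    ring

theorem prod_Icc_sub_prod_Icc_le_sum_Ioc_sub_mul (hβ : ∀ j, 0 < β j) (d d' : ℕ → ℝ) {ℓ k : ℕ}
    (hℓk : ℓ ≤ k) (hd : ∀ j, 0 ≤ d j) (hd' : ∀ j, d' j ≤ (1 - β j) / β j) :
    ∏ i ∈ Icc 1 k, β i - ∏ i ∈ Icc 1 ℓ, β i
      ≤ ∑ j ∈ Ioc ℓ k, (d j - d' j) * ∏ i ∈ Icc 1 j, β i := by
  rw [← neg_sub, ← sum_Ioc_one_sub_div_mul_prod_Icc β (fun j => (hβ j).ne') hℓk,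
    ← sum_neg_distrib]
  refine sum_le_sum fun j _ => ?_
  have hb : 0 < ∏ i ∈ Icc 1 j, β i := prod_pos fun i _ => hβ i
  nlinarith [hd j, hd' j]

end Telescope

theorem basic_interval_gap_general (β : ℕ → ℝ) (D : ℕ → Finset ℝ) (d d' : ℕ → ℝ) (ℓ k : ℕ)
    (hβ : ∀ j, 0 < β j ∧ β j < 1 / 2)
    (hD : ∀ j, ∀ x ∈ D j, x ∈ Set.Icc (0 : ℝ) ((1 - β j) / β j))
    (hd : ∀ j, d j ∈ D j) (hd' : ∀ j, d' j ∈ D j)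
    (hℓ : 1 ≤ ℓ) (hℓk : ℓ ≤ k)
    (hagree : ∀ j, j < ℓ → d j = d' j)
    (hjump : d' ℓ + 1 < d ℓ) :
    (d ℓ - d' ℓ - 1) * (∏ i ∈ Finset.Icc 1 ℓ, β i)
        ≤ (∑ j ∈ Finset.Icc 1 k, d j * ∏ i ∈ Finset.Icc 1 j, β i)
          - (∑ j ∈ Finset.Icc 1 k, d' j * ∏ i ∈ Finset.Icc 1 j, β i)
          - (∏ i ∈ Finset.Icc 1 k, β i) ∧
    0 < (d ℓ - d' ℓ - 1) * (∏ i ∈ Finset.Icc 1 ℓ, β i) ∧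
    (∑ j ∈ Finset.Icc 1 k, d' j * ∏ i ∈ Finset.Icc 1 j, β i) + (∏ i ∈ Finset.Icc 1 k, β i)
      < ∑ j ∈ Finset.Icc 1 k, d j * ∏ i ∈ Finset.Icc 1 j, β i ∧
    Disjoint
      (Set.Icc (∑ j ∈ Finset.Icc 1 k, d' j * ∏ i ∈ Finset.Icc 1 j, β i)
        ((∑ j ∈ Finset.Icc 1 k, d' j * ∏ i ∈ Finset.Icc 1 j, β i) + ∏ i ∈ Finset.Icc 1 k, β i))
      (Set.Icc (∑ j ∈ Finset.Icc 1 k, d j * ∏ i ∈ Finset.Icc 1 j, β i)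
        ((∑ j ∈ Finset.Icc 1 k, d j * ∏ i ∈ Finset.Icc 1 j, β i) + ∏ i ∈ Finset.Icc 1 k, β i)) := by
  set b : ℕ → ℝ := fun j => ∏ i ∈ Icc 1 j, β i
  have hdiff : ∑ j ∈ Icc 1 k, d j * b j - ∑ j ∈ Icc 1 k, d' j * b j
      = (d ℓ - d' ℓ) * b ℓ + ∑ j ∈ Ioc ℓ k, (d j - d' j) * b j := by
    simp only [← sum_sub_distrib, ← sub_mul]
    exact sum_Icc_eq_add_sum_Ioc_of_eq_zero _ hℓ hℓk
      fun j hj => by rw [hagree j hj, sub_self, zero_mul]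
  have htail := prod_Icc_sub_prod_Icc_le_sum_Ioc_sub_mul β (fun j => (hβ j).1) d d' hℓk
    (fun j => (hD j _ (hd j)).1) (fun j => (hD j _ (hd' j)).2)
  have hgap : 0 < (d ℓ - d' ℓ - 1) * b ℓ :=
    mul_pos (by linarith) (prod_pos fun i _ => (hβ i).1)
  have hlower : (d ℓ - d' ℓ - 1) * b ℓ
      ≤ ∑ j ∈ Icc 1 k, d j * b j - ∑ j ∈ Icc 1 k, d' j * b j - b k := by
    rw [hdiff]; linarith
  refine ⟨hlower, hgap, by linarith, Set.disjoint_left.2 fun x hx' hx => ?_⟩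
  linarith [hx'.2, hx.1]

/-- Remark 2.2 (gap estimate): with `b(k) = β_1⋯β_k`, if `x' = ∑ d'_j b(j)` and
`x = ∑ d_j b(j)` where the digit sequences agree below level `ℓ`, `d_ℓ > d'_ℓ + 1`,
and `d_j` is minimal, `d'_j` maximal in `D_j` for `ℓ < j ≤ k`, then
`x - x' - b(k) ≥ (d_ℓ - d'_ℓ - 1) b(ℓ) > 0`; in particular the basic intervals
`[x', x' + b(k)]` and `[x, x + b(k)]` are disjoint with a positive gap. -/
theorem basic_interval_gap (β : ℕ → ℝ) (D : ℕ → Finset ℝ) (d d' : ℕ → ℝ) (ℓ k : ℕ)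
    (hβ : ∀ j, 0 < β j ∧ β j < 1 / 2)
    (hD : ∀ j, ∀ x ∈ D j, x ∈ Set.Icc (0 : ℝ) ((1 - β j) / β j))
    (hDsep : ∀ j, ∀ x ∈ D j, ∀ y ∈ D j, x ≠ y → 1 < |x - y|)
    (hd : ∀ j, d j ∈ D j) (hd' : ∀ j, d' j ∈ D j)
    (hℓ : 1 ≤ ℓ) (hℓk : ℓ ≤ k)
    (hagree : ∀ j, j < ℓ → d j = d' j)
    (hjump : d' ℓ + 1 < d ℓ)
    (hmin : ∀ j, ℓ < j → j ≤ k → ∀ e ∈ D j, d j ≤ e)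
    (hmax : ∀ j, ℓ < j → j ≤ k → ∀ e ∈ D j, e ≤ d' j) :
    (d ℓ - d' ℓ - 1) * (∏ i ∈ Finset.Icc 1 ℓ, β i)
        ≤ (∑ j ∈ Finset.Icc 1 k, d j * ∏ i ∈ Finset.Icc 1 j, β i)
          - (∑ j ∈ Finset.Icc 1 k, d' j * ∏ i ∈ Finset.Icc 1 j, β i)
          - (∏ i ∈ Finset.Icc 1 k, β i) ∧
    0 < (d ℓ - d' ℓ - 1) * (∏ i ∈ Finset.Icc 1 ℓ, β i) ∧
    (∑ j ∈ Finset.Icc 1 k, d' j * ∏ i ∈ Finset.Icc 1 j, β i) + (∏ i ∈ Finset.Icc 1 k, β i)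
      < ∑ j ∈ Finset.Icc 1 k, d j * ∏ i ∈ Finset.Icc 1 j, β i ∧
    Disjoint
      (Set.Icc (∑ j ∈ Finset.Icc 1 k, d' j * ∏ i ∈ Finset.Icc 1 j, β i)
        ((∑ j ∈ Finset.Icc 1 k, d' j * ∏ i ∈ Finset.Icc 1 j, β i) + ∏ i ∈ Finset.Icc 1 k, β i))
      (Set.Icc (∑ j ∈ Finset.Icc 1 k, d j * ∏ i ∈ Finset.Icc 1 j, β i)
        ((∑ j ∈ Finset.Icc 1 k, d j * ∏ i ∈ Finset.Icc 1 j, β i) + ∏ i ∈ Finset.Icc 1 k, β i)) :=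
  basic_interval_gap_general β D d d' ℓ k hβ hD hd hd' hℓ hℓk hagree hjump
end

section
/- Let $0 < \beta_j < 1/2$, $D_j \subset [0,(1-\beta_j)/\beta_j]$ finite with all pairwise distances exceeding 1, and $b(k) = \beta_1\cdots\beta_k$. Then $C_k = \{\sum_{j=1}^k d_j b(j) : d_j \in D_j\} + [0, b(k)]$, and the union over the tuples $(d_1,\dots,d_k)$ of the intervals $[\sum_{j=1}^k d_j b(j), b(k) + \sum_{j=1}^k d_j b(j)]$ is a disjoint union; hence $C_k$ is a union of exactly $m_1\cdots m_k$ pairwise disjoint closed intervals each of length $b(k)$, where $m_j = \#D_j$. -/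
/-- `iterComp β d k = f_{1,d 1} ∘ f_{2,d 2} ∘ ⋯ ∘ f_{k,d k}` where
`f_{j,d}(x) = β_j (x + d)`. -/
def iterComp (β d : ℕ → ℝ) : ℕ → ℝ → ℝ
  | 0 => id
  | k + 1 => fun x => iterComp β d k (β (k + 1) * (x + d (k + 1)))

/-- The stage-`k` set `C_k = ⋃ f_{1,d_1}∘⋯∘f_{k,d_k}([0,1])`. -/
def stageSet (β : ℕ → ℝ) (D : ℕ → Finset ℝ) (k : ℕ) : Set ℝ :=
  ⋃ (d : ℕ → ℝ) (_ : ∀ j, d j ∈ D j), iterComp β d k '' Set.Icc 0 1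

/-- The set of left endpoints `∑_{j=1}^k d_j b(j)` of the basic intervals of order `k`. -/
def leftEndpoints (β : ℕ → ℝ) (D : ℕ → Finset ℝ) (k : ℕ) : Set ℝ :=
  {x | ∃ d : ℕ → ℝ, (∀ j, d j ∈ D j) ∧
    x = ∑ j ∈ Finset.Icc 1 k, d j * ∏ i ∈ Finset.Icc 1 j, β i}

noncomputable section StageAux

/-
Unwinding the recursion, `f_{1,d_1} ∘ ⋯ ∘ f_{k,d_k}` is the affine map `x ↦ b(k) x + ∑ d_j b(j)`,
so `C_k` is the union of the intervals `[x, x + b(k)]` over the left endpoints `x`. The left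
endpoints of order `k + 1` are the numbers `x + e b(k+1)` with `x` of order `k` and `e ∈ D_{k+1}`.
Since `D_{k+1} ⊆ [0, (1 - β_{k+1})/β_{k+1}]`, the term `e b(k+1)` varies by at most
`b(k) - b(k+1)`, while distinct digits of `D_{k+1}` are more than `1` apart; by induction distinct
left endpoints of order `k` are therefore more than `b(k)` apart. This separation makes the
intervals disjoint and `(x, e) ↦ x + e b(k+1)` injective, whence the count.
-/

open Finset

lemma lt_abs_add_mul_sub_add_mul {a a' e e' b c : ℝ} (hb : 0 < b) (hc : 0 < c)
    (ha : a ≠ a' → b < |a - a'|) (he : e ∈ Set.Icc 0 ((1 - c) / c))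
    (he' : e' ∈ Set.Icc 0 ((1 - c) / c)) (hee' : e ≠ e' → 1 < |e - e'|)
    (hne : (a, e) ≠ (a', e')) :
    b * c < |a + e * (b * c) - (a' + e' * (b * c))| := by
  have hbc : 0 < b * c := mul_pos hb hc
  have hdigit : |e - e'| * (b * c) ≤ b - b * c := by
    have hdiam : |e - e'| ≤ (1 - c) / c := abs_sub_le_iff.mpr
      ⟨by linarith [he.2, he'.1], by linarith [he.1, he'.2]⟩
    calc |e - e'| * (b * c) ≤ (1 - c) / c * (b * c) := by gcongr
      _ = b - b * c := by field_simp
  have hsplit : a + e * (b * c) - (a' + e' * (b * c)) = (a - a') + (e - e') * (b * c) := by ring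
  rw [hsplit]
  by_cases haa' : a = a'
  · have hee'' : e ≠ e' := fun h => hne (by rw [haa', h])
    rw [haa', sub_self, zero_add, abs_mul, abs_of_pos hbc]
    exact lt_mul_of_one_lt_left hbc (hee' hee'')
  · have := abs_sub_abs_le_abs_add (a - a') ((e - e') * (b * c))
    rw [abs_mul, abs_of_pos hbc] at this
    linarith [ha haa']

lemma disjoint_Icc_add_Icc_add_of_lt_abs_sub {x y b : ℝ} (h : b < |x - y|) :
    Disjoint (Set.Icc x (x + b)) (Set.Icc y (y + b)) := by
  rw [Set.disjoint_left]
  rintro z ⟨hxz, hzx⟩ ⟨hyz, hzy⟩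
  cases lt_abs.mp h <;> linarith

section StageSet

variable (β : ℕ → ℝ) (D : ℕ → Finset ℝ)

lemma iterComp_apply (d : ℕ → ℝ) (k : ℕ) (x : ℝ) :
    iterComp β d k x =
      (∏ i ∈ Icc 1 k, β i) * x + ∑ j ∈ Icc 1 k, d j * ∏ i ∈ Icc 1 j, β i := by
  induction k generalizing x with
  | zero => simp [iterComp]
  | succ k ih =>
    rw [iterComp]
    dsimp only
    rw [ih, sum_Icc_succ_top (by omega), prod_Icc_succ_top (by omega)]
    ring

lemma image_iterComp_Icc (hβ : ∀ j, 0 < β j) (d : ℕ → ℝ) (k : ℕ) :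
    iterComp β d k '' Set.Icc 0 1 =
      Set.Icc (∑ j ∈ Icc 1 k, d j * ∏ i ∈ Icc 1 j, β i)
        ((∑ j ∈ Icc 1 k, d j * ∏ i ∈ Icc 1 j, β i) + ∏ i ∈ Icc 1 k, β i) := by
  have hb : 0 < ∏ i ∈ Icc 1 k, β i := prod_pos fun i _ => hβ i
  rw [funext (iterComp_apply β d k), Set.image_affine_Icc' hb]
  simp [add_comm]

lemma stageSet_eq_biUnion_Icc (hβ : ∀ j, 0 < β j) (k : ℕ) :
    stageSet β D k =
      ⋃ x ∈ leftEndpoints β D k, Set.Icc x (x + ∏ i ∈ Icc 1 k, β i) := by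
  ext y
  simp only [stageSet, leftEndpoints, image_iterComp_Icc β hβ, Set.mem_iUnion,
    Set.mem_ofPred_eq, exists_prop]
  constructor
  · rintro ⟨d, hd, hy⟩
    exact ⟨_, ⟨d, hd, rfl⟩, hy⟩
  · rintro ⟨_, ⟨d, hd, rfl⟩, hy⟩
    exact ⟨d, hd, hy⟩

lemma leftEndpoints_zero_subset : leftEndpoints β D 0 ⊆ {0} := by
  rintro _ ⟨d, -, rfl⟩
  simp

lemma leftEndpoints_zero (hD : ∀ j, (D j).Nonempty) : leftEndpoints β D 0 = {0} := by
  refine (leftEndpoints_zero_subset β D).antisymm ?_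
  rintro _ rfl
  choose d hd using hD
  exact ⟨d, hd, by simp⟩

lemma leftEndpoints_succ (k : ℕ) :
    leftEndpoints β D (k + 1) =
      (fun p : ℝ × ℝ => p.1 + p.2 * ∏ i ∈ Icc 1 (k + 1), β i) ''
        (leftEndpoints β D k ×ˢ (D (k + 1) : Set ℝ)) := by
  ext x
  simp only [leftEndpoints, Set.mem_image, Set.mem_prod, Set.mem_ofPred_eq, Finset.mem_coe,
    Prod.exists]
  constructor
  · rintro ⟨d, hd, rfl⟩
    exact ⟨_, d (k + 1), ⟨⟨d, hd, rfl⟩, hd (k + 1)⟩, (sum_Icc_succ_top (by omega) _).symm⟩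
  · rintro ⟨_, e, ⟨⟨d, hd, rfl⟩, he⟩, rfl⟩
    refine ⟨Function.update d (k + 1) e, fun j => ?_, ?_⟩
    · rcases eq_or_ne j (k + 1) with rfl | hj
      · simpa using he
      · simpa [Function.update_of_ne hj] using hd j
    · rw [sum_Icc_succ_top (by omega), Function.update_self]
      congr 1
      refine sum_congr rfl fun j hj => ?_
      rw [Function.update_of_ne (by simp at hj; omega)]

variable {β D}

section Digits

variable (hβ : ∀ j, 0 < β j)
  (hD : ∀ j, ∀ x ∈ D j, x ∈ Set.Icc (0 : ℝ) ((1 - β j) / β j))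
  (hDsep : ∀ j, ∀ x ∈ D j, ∀ y ∈ D j, x ≠ y → 1 < |x - y|)
include hβ hD hDsep

lemma lt_abs_add_mul_prod_sub {k : ℕ}
    (hsep : (leftEndpoints β D k).Pairwise fun x y => ∏ i ∈ Icc 1 k, β i < |x - y|)
    {p q : ℝ × ℝ} (hp : p ∈ leftEndpoints β D k ×ˢ (D (k + 1) : Set ℝ))
    (hq : q ∈ leftEndpoints β D k ×ˢ (D (k + 1) : Set ℝ)) (hpq : p ≠ q) :
    ∏ i ∈ Icc 1 (k + 1), β i <
      |p.1 + p.2 * ∏ i ∈ Icc 1 (k + 1), β i - (q.1 + q.2 * ∏ i ∈ Icc 1 (k + 1), β i)| := by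
  rw [prod_Icc_succ_top (by omega)]
  exact lt_abs_add_mul_sub_add_mul (prod_pos fun i _ => hβ i) (hβ _) (hsep hp.1 hq.1)
    (hD _ _ hp.2) (hD _ _ hq.2) (hDsep _ _ hp.2 _ hq.2) hpq

lemma pairwise_lt_abs_sub_leftEndpoints (k : ℕ) :
    (leftEndpoints β D k).Pairwise fun x y => ∏ i ∈ Icc 1 k, β i < |x - y| := by
  induction k with
  | zero => exact (Set.subsingleton_singleton.anti (leftEndpoints_zero_subset β D)).pairwise _
  | succ k ih =>
    rw [leftEndpoints_succ]
    rintro _ ⟨p, hp, rfl⟩ _ ⟨q, hq, rfl⟩ hne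
    exact lt_abs_add_mul_prod_sub hβ hD hDsep ih hp hq (by rintro rfl; exact hne rfl)

lemma ncard_leftEndpoints (hne : ∀ j, (D j).Nonempty) (k : ℕ) :
    (leftEndpoints β D k).ncard = ∏ j ∈ Icc 1 k, (D j).card := by
  induction k with
  | zero => simp [leftEndpoints_zero _ _ hne]
  | succ k ih =>
    have hinj : Set.InjOn (fun p : ℝ × ℝ => p.1 + p.2 * ∏ i ∈ Icc 1 (k + 1), β i)
        (leftEndpoints β D k ×ˢ (D (k + 1) : Set ℝ)) := fun p hp q hq heq => by
      by_contra hpq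
      have := lt_abs_add_mul_prod_sub hβ hD hDsep
        (pairwise_lt_abs_sub_leftEndpoints hβ hD hDsep k) hp hq hpq
      simp only [heq, sub_self, abs_zero] at this
      exact this.not_gt (prod_pos fun i _ => hβ i)
    rw [leftEndpoints_succ, hinj.ncard_image, Set.ncard_prod, ih, Set.ncard_coe_finset,
      prod_Icc_succ_top (by omega)]

end Digits

end StageSet

/-- `C_k` is the disjoint union of `m_1⋯m_k` closed intervals of length `b(k)`:
`C_k = ⋃_{x ∈ leftEndpoints} [x, x + b(k)]`, the intervals are pairwise disjoint,
and there are exactly `∏ (D j).card` of them. -/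
theorem stage_set_structure (β : ℕ → ℝ) (D : ℕ → Finset ℝ) (k : ℕ)
    (hβ : ∀ j, 0 < β j ∧ β j < 1 / 2)
    (hD : ∀ j, ∀ x ∈ D j, x ∈ Set.Icc (0 : ℝ) ((1 - β j) / β j))
    (hDcard : ∀ j, 2 ≤ (D j).card)
    (hDsep : ∀ j, ∀ x ∈ D j, ∀ y ∈ D j, x ≠ y → 1 < |x - y|) :
    stageSet β D k =
      ⋃ x ∈ leftEndpoints β D k, Set.Icc x (x + ∏ i ∈ Finset.Icc 1 k, β i) ∧
    (leftEndpoints β D k).Pairwise (fun x y =>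
      Disjoint (Set.Icc x (x + ∏ i ∈ Finset.Icc 1 k, β i))
        (Set.Icc y (y + ∏ i ∈ Finset.Icc 1 k, β i))) ∧
    (leftEndpoints β D k).ncard = ∏ j ∈ Finset.Icc 1 k, (D j).card := by
  have hβpos : ∀ j, 0 < β j := fun j => (hβ j).1
  have hne : ∀ j, (D j).Nonempty := fun j => card_pos.mp (by linarith [hDcard j])
  refine ⟨stageSet_eq_biUnion_Icc β D hβpos k, ?_, ncard_leftEndpoints hβpos hD hDsep hne k⟩
  exact (pairwise_lt_abs_sub_leftEndpoints hβpos hD hDsep k).mono'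
    fun _ _ => disjoint_Icc_add_Icc_add_of_lt_abs_sub
end StageAux
end

section
/- Let $t \geq 1$ be a real number, let $m_1, \dots, m_k \geq 2$ be integers, and let $\alpha_1, \dots, \alpha_k \geq 0$ be integers with $0 \leq \alpha_j \leq m_j - 1$. Then $\left(1 + \sum_{j=1}^{k} \alpha_j m_{j+1}\cdots m_k\right)^t \leq (1+\alpha_k)^t + \sum_{j=1}^{k-1}\left((1+\alpha_j)^t - 1\right)(m_{j+1}\cdots m_k)^t$, where the empty product $m_{k+1}\cdots m_k = 1$. -/
/-- Increment of a convex power function is monotone: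
`(a+c)^t + b^t ≤ a^t + (b+c)^t` for `0 ≤ a ≤ b`, `0 ≤ c`, `1 ≤ t`. -/
lemma rpow_increment_le {t a b c : ℝ} (ht : 1 ≤ t) (ha : 0 ≤ a) (hab : a ≤ b)
    (hc : 0 ≤ c) : (a + c) ^ t + b ^ t ≤ a ^ t + (b + c) ^ t := by
  have hcv := convexOn_rpow ht
  have hb : 0 ≤ b := ha.trans hab
  rcases eq_or_lt_of_le (by linarith : (0:ℝ) ≤ b - a + c) with hd | hd
  · have h1 : a = b := by linarith
    have h2 : c = 0 := by linarith
    subst h1; subst h2; simp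
  set d := b - a + c with hdd
  set μ := c / d with hμ
  have hμ0 : 0 ≤ μ := div_nonneg hc hd.le
  have hμ1 : μ ≤ 1 := by
    rw [hμ, div_le_one hd]; linarith
  have hmem1 : a ∈ Set.Ici (0:ℝ) := ha
  have hmem2 : b + c ∈ Set.Ici (0:ℝ) := by simp; linarith
  have e1 : (1 - μ) • a + μ • (b + c) = a + c := by
    simp only [smul_eq_mul, hμ]
    field_simp
    ring
  have e2 : μ • a + (1 - μ) • (b + c) = b := by
    simp only [smul_eq_mul, hμ]
    field_simp
    ring
  have h1 := hcv.2 hmem1 hmem2 (by linarith : (0:ℝ) ≤ 1 - μ) hμ0 (by ring)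
  have h2 := hcv.2 hmem1 hmem2 hμ0 (by linarith : (0:ℝ) ≤ 1 - μ) (by ring)
  rw [e1] at h1
  rw [e2] at h2
  simp only [smul_eq_mul] at h1 h2
  linarith

/-- The magic inequality: `(A + B*C)^t ≤ A^t + ((1+B)^t - 1) * C^t`
for `1 ≤ t`, `0 ≤ A ≤ C`, `0 ≤ B`. -/
lemma magic_ineq {t A B C : ℝ} (ht : 1 ≤ t) (hA : 0 ≤ A) (hAC : A ≤ C) (hB : 0 ≤ B) :
    (A + B * C) ^ t ≤ A ^ t + ((1 + B) ^ t - 1) * C ^ t := by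
  have hC : 0 ≤ C := hA.trans hAC
  have h := rpow_increment_le ht hA hAC (mul_nonneg hB hC)
  have hmul : (C + B * C) ^ t = (1 + B) ^ t * C ^ t := by
    rw [show C + B * C = (1 + B) * C by ring, Real.mul_rpow (by linarith) hC]
  have hC1 : C ^ t = 1 * C ^ t := (one_mul _).symm
  nlinarith [h, hmul]

/-- Iterated magic inequality: for `t ≥ 1`, integers `m_j ≥ 2` and
`0 ≤ α_j ≤ m_j - 1`,
`(1 + ∑_{j=1}^k α_j m_{j+1}⋯m_k)^t ≤ (1+α_k)^t + ∑_{j=1}^{k-1} ((1+α_j)^t - 1)(m_{j+1}⋯m_k)^t`. -/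
theorem iterated_magic_inequality (t : ℝ) (k : ℕ) (m α : ℕ → ℕ)
    (ht : 1 ≤ t) (hk : 1 ≤ k)
    (hm : ∀ j, 1 ≤ j → j ≤ k → 2 ≤ m j)
    (hα : ∀ j, 1 ≤ j → j ≤ k → α j ≤ m j - 1) :
    (1 + ∑ j ∈ Finset.Icc 1 k, (α j : ℝ) * ∏ i ∈ Finset.Icc (j + 1) k, (m i : ℝ)) ^ t
      ≤ (1 + (α k : ℝ)) ^ t +
        ∑ j ∈ Finset.Icc 1 (k - 1),
          ((1 + (α j : ℝ)) ^ t - 1) * (∏ i ∈ Finset.Icc (j + 1) k, (m i : ℝ)) ^ t := by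
  induction k, hk using Nat.le_induction with
  | base =>
    simp
  | succ n hn IH =>
    obtain ⟨p, rfl⟩ : ∃ p, n = p + 1 := ⟨n - 1, by omega⟩
    set q := p + 1 with hq
    have hmn : ∀ j, 1 ≤ j → j ≤ q → 2 ≤ m j := fun j h1 h2 => hm j h1 (h2.trans (Nat.le_succ q))
    have hαn : ∀ j, 1 ≤ j → j ≤ q → α j ≤ m j - 1 := fun j h1 h2 => hα j h1 (h2.trans (Nat.le_succ q))
    have IH' := IH hmn hαn
    set T : ℝ := ∑ j ∈ Finset.Icc 1 q, (α j : ℝ) * ∏ i ∈ Finset.Icc (j + 1) q, (m i : ℝ) with hT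
    have hT0 : 0 ≤ T := by
      apply Finset.sum_nonneg
      intro j _
      exact mul_nonneg (Nat.cast_nonneg _) (Finset.prod_nonneg fun i _ => Nat.cast_nonneg _)
    have hsum : ∑ j ∈ Finset.Icc 1 (q+1), (α j : ℝ) * ∏ i ∈ Finset.Icc (j + 1) (q+1), (m i : ℝ)
        = (α (q+1) : ℝ) + T * (m (q+1) : ℝ) := by
      rw [Finset.sum_Icc_succ_top (by omega : 1 ≤ q + 1)]
      have : ∀ j ∈ Finset.Icc 1 q,
          (α j : ℝ) * ∏ i ∈ Finset.Icc (j + 1) (q+1), (m i : ℝ)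
          = ((α j : ℝ) * ∏ i ∈ Finset.Icc (j + 1) q, (m i : ℝ)) * (m (q+1) : ℝ) := by
        intro j hj
        rw [Finset.mem_Icc] at hj
        rw [Finset.prod_Icc_succ_top (by omega : j + 1 ≤ q + 1)]
        ring
      rw [Finset.sum_congr rfl this, ← Finset.sum_mul, ← hT]
      simp
      ring
    have hm1 : (2:ℝ) ≤ (m (q+1) : ℝ) := by
      exact_mod_cast hm (q+1) (by omega) le_rfl
    have hα1 : (α (q+1) : ℝ) ≤ (m (q+1) : ℝ) - 1 := by
      have h2 := hm (q+1) (by omega) le_rfl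
      have h3 := hα (q+1) (by omega) le_rfl
      have h4 : (α (q+1) + 1 : ℕ) ≤ m (q+1) := by omega
      have h5 := (Nat.cast_le (α := ℝ)).2 h4
      push_cast at h5
      linarith
    have hmagic := magic_ineq (A := 1 + (α (q+1) : ℝ)) (B := T) (C := (m (q+1) : ℝ)) ht
      (by positivity) (by linarith) hT0
    have hrhs : ∑ j ∈ Finset.Icc 1 (q + 1 - 1),
          ((1 + (α j : ℝ)) ^ t - 1) * (∏ i ∈ Finset.Icc (j + 1) (q+1), (m i : ℝ)) ^ t
        = (((1 + (α q : ℝ)) ^ t - 1)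
            + ∑ j ∈ Finset.Icc 1 (q - 1),
              ((1 + (α j : ℝ)) ^ t - 1) * (∏ i ∈ Finset.Icc (j + 1) q, (m i : ℝ)) ^ t)
          * (m (q+1) : ℝ) ^ t := by
      have hstep : q + 1 - 1 = q := rfl
      have hstep2 : q - 1 = p := rfl
      rw [hstep, hstep2, hq, Finset.sum_Icc_succ_top (by omega : 1 ≤ p + 1)]
      have h1 : ∀ j ∈ Finset.Icc 1 p,
          ((1 + (α j : ℝ)) ^ t - 1) * (∏ i ∈ Finset.Icc (j + 1) (p + 1 + 1), (m i : ℝ)) ^ t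
          = (((1 + (α j : ℝ)) ^ t - 1) * (∏ i ∈ Finset.Icc (j + 1) (p + 1), (m i : ℝ)) ^ t)
              * (m (p + 1 + 1) : ℝ) ^ t := by
        intro j hj
        rw [Finset.mem_Icc] at hj
        rw [Finset.prod_Icc_succ_top (by omega : j + 1 ≤ p + 1 + 1),
          Real.mul_rpow (Finset.prod_nonneg fun i _ => Nat.cast_nonneg _) (Nat.cast_nonneg _)]
        ring
      rw [Finset.sum_congr rfl h1, ← Finset.sum_mul]
      rw [Finset.prod_Icc_succ_top (by omega : p + 1 + 1 ≤ p + 1 + 1)]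
      rw [show Finset.Icc (p+1+1) (p+1) = ∅ from Finset.Icc_eq_empty (by omega)]
      simp
      ring
    rw [hsum, hrhs]
    have key : (1 + ((α (q+1) : ℝ) + T * (m (q+1) : ℝ))) ^ t
        = ((1 + (α (q+1) : ℝ)) + T * (m (q+1) : ℝ)) ^ t := by ring_nf
    rw [key]
    refine hmagic.trans ?_
    have hmt : (0:ℝ) ≤ (m (q+1) : ℝ) ^ t := Real.rpow_nonneg (Nat.cast_nonneg _) _
    have hIH2 : (1 + T) ^ t - 1 ≤ ((1 + (α q : ℝ)) ^ t
        + ∑ j ∈ Finset.Icc 1 (q - 1),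
          ((1 + (α j : ℝ)) ^ t - 1) * (∏ i ∈ Finset.Icc (j + 1) q, (m i : ℝ)) ^ t) - 1 := by
      linarith [IH']
    nlinarith [mul_le_mul_of_nonneg_right hIH2 hmt]
end
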